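/- Let S, Q be disjoint finite sets and let M_S, M_Q be matroids on S, Q respectively. Let B be the collection of all subsets b ⊆ S⊎Q with |b| = r(M_S) + r(M_Q) such that b∩S is independent in M_S and b∩Q is a spanning set of M_Q. Then B is the base family of a matroid N on S⊎Q (the free product M_S □ M_Q); moreover N∘S = M_S, N×Q = M_Q, and N is {S,Q}-complete. -/

import Mathlib

/-!
A set `I ⊆ S ∪ Q` is independent in the free product iff `I ∩ S` is independent in `M_S` and
`|I| ≤ r(M_S) + r_{M_Q}(I ∩ Q)`. These sets satisfy the augmentation axiom: given `|I| < |J|`,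
either some element of `J ∩ Q` lies outside the `M_Q`-closure of `I` and raises `r_{M_Q}(I ∩ Q)`
by one, or `r_{M_Q}(J ∩ Q) ≤ r_{M_Q}(I ∩ Q)`, which leaves slack in the bound for `I`, and then an
element of `J ∩ Q` outside `I`, or else one that augments `I ∩ S` inside `J ∩ S` in `M_S`, can be
added. The bases are the independent sets of size `r(M_S) + r(M_Q)`, i.e. exactly the sets of
the statement, and the restriction to `S`, the contraction to `Q` and `{S,Q}`-completeness are
read off from this description of the bases.
-/

open Matroid Set

variable {α : Type*}

/-- The contraction `M × T` of a matroid to the set `T` (i.e. the contraction of the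
complement of `T`), defined via the standard identity `M × T = (M✶ ↾ T)✶`. -/
def Matroid.conTo (M : Matroid α) (T : Set α) : Matroid α := (M✶ ↾ T)✶

def Matroid.SQComplete (M : Matroid α) (S Q : Set α) : Prop :=
  ∀ bS bS' bQ bQ' : Set α, bS ⊆ S → bS' ⊆ S → bQ ⊆ Q → bQ' ⊆ Q →
    M.IsBase (bS ∪ bQ) → M.IsBase (bS ∪ bQ') → M.IsBase (bS' ∪ bQ) → M.IsBase (bS' ∪ bQ')

noncomputable def Matroid.rnk (M : Matroid α) (X : Set α) : ℕ :=
  sSup {n | ∃ I, M.Indep I ∧ I ⊆ X ∧ I.ncard = n}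

namespace Set

variable {s A B X Y : Set α}

lemma encard_eq_encard_inter_add_encard_inter (hAB : Disjoint A B) (hs : s ⊆ A ∪ B) :
    s.encard = (s ∩ A).encard + (s ∩ B).encard := by
  rw [← encard_union_eq (hAB.mono inter_subset_right inter_subset_right),
    ← inter_union_distrib_left, inter_eq_self_of_subset_left hs]

lemma union_inter_eq_left_of_disjoint (hAB : Disjoint A B) (hX : X ⊆ A) (hY : Y ⊆ B) :
    (X ∪ Y) ∩ A = X := by
  rw [union_inter_distrib_right, inter_eq_self_of_subset_left hX,
    (hAB.symm.mono_left hY).inter_eq, union_empty]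

lemma union_inter_eq_right_of_disjoint (hAB : Disjoint A B) (hX : X ⊆ A) (hY : Y ⊆ B) :
    (X ∪ Y) ∩ B = Y := by
  rw [union_comm, union_inter_eq_left_of_disjoint hAB.symm hY hX]

end Set

namespace Matroid

variable {M : Matroid α} {B : Set α}

lemma cast_rnk_eq_eRk [M.RankFinite] (X : Set α) : (M.rnk X : ℕ∞) = M.eRk X := by
  obtain ⟨I, hI⟩ := M.exists_isBasis' X
  have hIfin : I.Finite := hI.indep.finite
  suffices M.rnk X = I.ncard by rw [this, hIfin.cast_ncard_eq, hI.encard_eq_eRk]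
  refine IsGreatest.csSup_eq ⟨⟨I, hI.indep, hI.subset, rfl⟩, ?_⟩
  rintro _ ⟨J, hJ, hJX, rfl⟩
  rw [← Nat.cast_le (α := ℕ∞), hJ.finite.cast_ncard_eq, hIfin.cast_ncard_eq, hI.encard_eq_eRk]
  exact hJ.encard_le_eRk_of_subset hJX

lemma isBase_iff_indep_encard_eq [M.RankFinite] : M.IsBase B ↔ M.Indep B ∧ B.encard = M.eRank :=
  ⟨fun hB ↦ ⟨hB.indep, hB.encard_eq_eRank⟩, fun ⟨hB, hcard⟩ ↦
    hB.isBase_of_eRk_ge hB.finite (by rw [hB.eRk_eq_encard, hcard])⟩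

variable {M₁ M₂ : Matroid α} {I J X Y : Set α} {e : α}

lemma eRank_add_eRank_ne_top (M₁ M₂ : Matroid α) [M₁.RankFinite] [M₂.RankFinite] :
    M₁.eRank + M₂.eRank ≠ ⊤ :=
  WithTop.add_ne_top.2 ⟨M₁.eRank_ne_top_iff.2 ‹_›, M₂.eRank_ne_top_iff.2 ‹_›⟩

def FreeProductIndep (M₁ M₂ : Matroid α) (I : Set α) : Prop :=
  I ⊆ M₁.E ∪ M₂.E ∧ M₁.Indep (I ∩ M₁.E) ∧ I.encard ≤ M₁.eRank + M₂.eRk I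

namespace FreeProductIndep

lemma encard_le_eRank_add_eRank (hI : FreeProductIndep M₁ M₂ I) :
    I.encard ≤ M₁.eRank + M₂.eRank :=
  hI.2.2.trans (by grw [M₂.eRk_le_eRank I])

lemma insert_of_encard_lt (hI : FreeProductIndep M₁ M₂ I)
    (hslack : I.encard < M₁.eRank + M₂.eRk I) (he : e ∈ M₁.E ∪ M₂.E)
    (h₁ : M₁.Indep (insert e I ∩ M₁.E)) : FreeProductIndep M₁ M₂ (insert e I) := by
  refine ⟨insert_subset he hI.1, h₁, ?_⟩
  calc (insert e I).encard ≤ I.encard + 1 := encard_insert_le _ _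
    _ ≤ M₁.eRank + M₂.eRk I := Order.add_one_le_of_lt hslack
    _ ≤ M₁.eRank + M₂.eRk (insert e I) := by grw [M₂.eRk_mono (subset_insert e I)]

lemma insert_of_mem_ground_diff_closure (hdisj : Disjoint M₁.E M₂.E)
    (hI : FreeProductIndep M₁ M₂ I) (he : e ∈ M₂.E \ M₂.closure I) :
    FreeProductIndep M₁ M₂ (insert e I) := by
  refine ⟨insert_subset (Or.inr he.1) hI.1, ?_, ?_⟩
  · rw [insert_inter_of_notMem (hdisj.notMem_of_mem_right he.1)]
    exact hI.2.1
  · calc (insert e I).encard ≤ I.encard + 1 := encard_insert_le _ _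
      _ ≤ M₁.eRank + M₂.eRk I + 1 := by grw [hI.2.2]
      _ = M₁.eRank + M₂.eRk (insert e I) := by rw [eRk_insert_eq_add_one he, add_assoc]

variable [M₁.RankFinite] [M₂.RankFinite]

lemma finite (hI : FreeProductIndep M₁ M₂ I) : I.Finite :=
  encard_ne_top_iff.1 <|
    ne_top_of_le_ne_top (eRank_add_eRank_ne_top M₁ M₂) hI.encard_le_eRank_add_eRank

lemma subset (hJ : FreeProductIndep M₁ M₂ J) (hIJ : I ⊆ J) :
    FreeProductIndep M₁ M₂ I := by
  refine ⟨hIJ.trans hJ.1, hJ.2.1.subset (inter_subset_inter_left _ hIJ), ?_⟩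
  rw [← ENat.add_le_add_iff_right hJ.finite.sdiff.encard_lt_top.ne]
  calc I.encard + (J \ I).encard = J.encard := by
        rw [add_comm, encard_sdiff_add_encard_of_subset hIJ]
    _ ≤ M₁.eRank + M₂.eRk J := hJ.2.2
    _ ≤ M₁.eRank + (M₂.eRk I + (J \ I).encard) := by
        grw [← M₂.eRk_union_le_eRk_add_encard, union_sdiff_cancel hIJ]
    _ = M₁.eRank + M₂.eRk I + (J \ I).encard := (add_assoc _ _ _).symm

lemma exists_insert_of_encard_lt (hdisj : Disjoint M₁.E M₂.E) (hI : FreeProductIndep M₁ M₂ I)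
    (hJ : FreeProductIndep M₁ M₂ J) (hlt : I.encard < J.encard) :
    ∃ e ∈ J, e ∉ I ∧ FreeProductIndep M₁ M₂ (insert e I) := by
  by_cases hcl : J ∩ M₂.E ⊆ M₂.closure I
  swap
  · obtain ⟨e, ⟨heJ, he₂⟩, hecl⟩ := not_subset.1 hcl
    exact ⟨e, heJ, fun heI ↦ hecl (M₂.inter_ground_subset_closure I ⟨heI, he₂⟩),
      hI.insert_of_mem_ground_diff_closure hdisj ⟨he₂, hecl⟩⟩
  -- `J ∩ M₂.E` adds no rank to `I`, so the cardinality bound for `I` is strict.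
  have hslack : I.encard < M₁.eRank + M₂.eRk I := calc
    I.encard < J.encard := hlt
    _ ≤ M₁.eRank + M₂.eRk J := hJ.2.2
    _ ≤ M₁.eRank + M₂.eRk I := by
        grw [← eRk_inter_ground, M₂.eRk_mono hcl, eRk_closure_eq]
  by_cases hJI : J ∩ M₂.E ⊆ I
  swap
  · obtain ⟨e, ⟨heJ, he₂⟩, heI⟩ := not_subset.1 hJI
    refine ⟨e, heJ, heI, hI.insert_of_encard_lt hslack (Or.inr he₂) ?_⟩
    rw [insert_inter_of_notMem (hdisj.notMem_of_mem_right he₂)]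
    exact hI.2.1
  have hlt₁ : (I ∩ M₁.E).encard < (J ∩ M₁.E).encard := by
    rw [← ENat.add_lt_add_iff_right (hI.finite.inter_of_left M₂.E).encard_lt_top.ne]
    calc (I ∩ M₁.E).encard + (I ∩ M₂.E).encard = I.encard :=
          (encard_eq_encard_inter_add_encard_inter hdisj hI.1).symm
      _ < J.encard := hlt
      _ = (J ∩ M₁.E).encard + (J ∩ M₂.E).encard :=
          encard_eq_encard_inter_add_encard_inter hdisj hJ.1
      _ ≤ (J ∩ M₁.E).encard + (I ∩ M₂.E).encard := by
          grw [subset_inter hJI inter_subset_right]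
  obtain ⟨e, ⟨⟨heJ, he₁⟩, heI⟩, hins⟩ := hI.2.1.exists_insert_of_encard_lt hJ.2.1 hlt₁
  refine ⟨e, heJ, fun h ↦ heI ⟨h, he₁⟩, hI.insert_of_encard_lt hslack (Or.inl he₁) ?_⟩
  rwa [insert_inter_of_mem he₁]

end FreeProductIndep

section FreeProduct

def freeProduct (M₁ M₂ : Matroid α) [M₁.RankFinite] [M₂.RankFinite]
    (hdisj : Disjoint M₁.E M₂.E) : Matroid α :=
  (IndepMatroid.ofBddAugment (M₁.E ∪ M₂.E) (FreeProductIndep M₁ M₂)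
    ⟨empty_subset _, by simp, by simp⟩
    (fun _ _ hJ hIJ ↦ hJ.subset hIJ)
    (fun _ _ hI hJ hlt ↦ hI.exists_insert_of_encard_lt hdisj hJ hlt)
    ⟨(M₁.eRank + M₂.eRank).toNat, fun _ hI ↦ hI.encard_le_eRank_add_eRank.trans_eq
      (ENat.natCast_toNat (eRank_add_eRank_ne_top M₁ M₂)).symm⟩
    (fun _ hI ↦ hI.1)).matroid

variable [M₁.RankFinite] [M₂.RankFinite] (hdisj : Disjoint M₁.E M₂.E)

@[simp]
lemma freeProduct_ground : (freeProduct M₁ M₂ hdisj).E = M₁.E ∪ M₂.E := rfl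

@[simp]
lemma freeProduct_indep_iff : (freeProduct M₁ M₂ hdisj).Indep I ↔ FreeProductIndep M₁ M₂ I :=
  Iff.rfl

instance freeProduct_rankFinite : (freeProduct M₁ M₂ hdisj).RankFinite :=
  IndepMatroid.ofBddAugment_rankFinite ..

lemma freeProductIndep_iff_of_encard_eq (hcard : I.encard = M₁.eRank + M₂.eRank) :
    FreeProductIndep M₁ M₂ I ↔
      I ⊆ M₁.E ∪ M₂.E ∧ M₁.Indep (I ∩ M₁.E) ∧ M₂.Spanning (I ∩ M₂.E) := by
  rw [FreeProductIndep, hcard, ENat.add_le_add_iff_left (M₁.eRank_ne_top_iff.2 ‹_›),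
    spanning_iff_eRk_le inter_subset_right, eRk_inter_ground]

lemma freeProduct_eRank : (freeProduct M₁ M₂ hdisj).eRank = M₁.eRank + M₂.eRank := by
  obtain ⟨B, hB⟩ := (freeProduct M₁ M₂ hdisj).exists_isBase
  obtain ⟨B₁, hB₁⟩ := M₁.exists_isBase
  obtain ⟨B₂, hB₂⟩ := M₂.exists_isBase
  refine le_antisymm ?_ ?_
  · rw [← hB.encard_eq_eRank]
    exact ((freeProduct_indep_iff hdisj).1 hB.indep).encard_le_eRank_add_eRank
  have hcard : (B₁ ∪ B₂).encard = M₁.eRank + M₂.eRank := by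
    rw [encard_union_eq (hdisj.mono hB₁.subset_ground hB₂.subset_ground),
      hB₁.encard_eq_eRank, hB₂.encard_eq_eRank]
  have hindep : FreeProductIndep M₁ M₂ (B₁ ∪ B₂) := by
    rw [freeProductIndep_iff_of_encard_eq hcard,
      union_inter_eq_left_of_disjoint hdisj hB₁.subset_ground hB₂.subset_ground,
      union_inter_eq_right_of_disjoint hdisj hB₁.subset_ground hB₂.subset_ground]
    exact ⟨union_subset_union hB₁.subset_ground hB₂.subset_ground, hB₁.indep, hB₂.spanning⟩
  rw [← hcard]
  exact ((freeProduct_indep_iff hdisj).2 hindep).encard_le_eRank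

lemma freeProduct_isBase_iff : (freeProduct M₁ M₂ hdisj).IsBase B ↔
    B ⊆ M₁.E ∪ M₂.E ∧ B.encard = M₁.eRank + M₂.eRank ∧
      M₁.Indep (B ∩ M₁.E) ∧ M₂.Spanning (B ∩ M₂.E) := by
  rw [isBase_iff_indep_encard_eq, freeProduct_indep_iff, freeProduct_eRank]
  constructor
  · rintro ⟨hB, hcard⟩
    obtain ⟨hBE, h₁, h₂⟩ := (freeProductIndep_iff_of_encard_eq hcard).1 hB
    exact ⟨hBE, hcard, h₁, h₂⟩
  · rintro ⟨hBE, hcard, h₁, h₂⟩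
    exact ⟨(freeProductIndep_iff_of_encard_eq hcard).2 ⟨hBE, h₁, h₂⟩, hcard⟩

lemma freeProduct_isBase_union_iff (hX : X ⊆ M₁.E) (hY : Y ⊆ M₂.E) :
    (freeProduct M₁ M₂ hdisj).IsBase (X ∪ Y) ↔
      X.encard + Y.encard = M₁.eRank + M₂.eRank ∧ M₁.Indep X ∧ M₂.Spanning Y := by
  rw [freeProduct_isBase_iff, union_inter_eq_left_of_disjoint hdisj hX hY,
    union_inter_eq_right_of_disjoint hdisj hX hY, encard_union_eq (hdisj.mono hX hY)]
  exact and_iff_right (union_subset_union hX hY)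

lemma freeProduct_restrict_left : freeProduct M₁ M₂ hdisj ↾ M₁.E = M₁ := by
  refine ext_indep rfl fun I (hI : I ⊆ M₁.E) ↦ ?_
  rw [restrict_indep_iff, freeProduct_indep_iff, FreeProductIndep,
    inter_eq_self_of_subset_left hI]
  exact ⟨fun h ↦ h.1.2.1, fun h ↦
    ⟨⟨hI.trans subset_union_left, h, h.encard_le_eRank.trans le_self_add⟩, hI⟩⟩

lemma freeProduct_dual_restrict_right : (freeProduct M₁ M₂ hdisj)✶ ↾ M₂.E = M₂✶ := by
  refine ext_indep rfl fun I (hI : I ⊆ M₂.E) ↦ ?_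
  rw [restrict_indep_iff, dual_indep_iff_exists', dual_indep_iff_exists']
  constructor
  · rintro ⟨⟨-, B, hB, hIB⟩, -⟩
    obtain ⟨B₂, hB₂, hB₂B⟩ := ((freeProduct_isBase_iff hdisj).1 hB).2.2.2.exists_isBase_subset
    exact ⟨hI, B₂, hB₂, hIB.mono_right (hB₂B.trans inter_subset_left)⟩
  · rintro ⟨-, B₂, hB₂, hIB₂⟩
    obtain ⟨B₁, hB₁⟩ := M₁.exists_isBase
    have hB : (freeProduct M₁ M₂ hdisj).IsBase (B₁ ∪ B₂) := by
      rw [freeProduct_isBase_union_iff hdisj hB₁.subset_ground hB₂.subset_ground,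
        hB₁.encard_eq_eRank, hB₂.encard_eq_eRank]
      exact ⟨rfl, hB₁.indep, hB₂.spanning⟩
    exact ⟨⟨hI.trans subset_union_right, B₁ ∪ B₂, hB,
      disjoint_union_right.2 ⟨(hdisj.symm.mono hI hB₁.subset_ground), hIB₂⟩⟩, hI⟩

lemma freeProduct_sqComplete : (freeProduct M₁ M₂ hdisj).SQComplete M₁.E M₂.E := by
  intro X X' Y Y' hX hX' hY hY' hXY hXY' hX'Y
  rw [freeProduct_isBase_union_iff hdisj hX hY] at hXY
  rw [freeProduct_isBase_union_iff hdisj hX hY'] at hXY'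
  rw [freeProduct_isBase_union_iff hdisj hX' hY] at hX'Y
  rw [freeProduct_isBase_union_iff hdisj hX' hY']
  have hYY' : Y.encard = Y'.encard :=
    WithTop.add_left_cancel hXY.2.1.finite.encard_lt_top.ne (hXY.1.trans hXY'.1.symm)
  exact ⟨hYY' ▸ hX'Y.1, hX'Y.2.1, hXY'.2.2⟩

end FreeProduct

end Matroid

/-- the free product `M_S □ M_Q`: the sets `b ⊆ S ∪ Q` of size
`r(M_S) + r(M_Q)` with `b ∩ S` independent in `M_S` and `b ∩ Q` spanning in `M_Q` form
the base family of a matroid `N` with `N∘S = M_S`, `N×Q = M_Q`, and `N` is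
`{S,Q}`-complete. -/
theorem free_product_matroid (S Q : Set α) (hdisj : Disjoint S Q)
    (M_S M_Q : Matroid α) [M_S.Finite] [M_Q.Finite] (hES : M_S.E = S) (hEQ : M_Q.E = Q) :
    ∃ N : Matroid α, N.E = S ∪ Q ∧
      (∀ b : Set α, N.IsBase b ↔ (b ⊆ S ∪ Q ∧ b.ncard = M_S.rnk S + M_Q.rnk Q ∧
        M_S.Indep (b ∩ S) ∧ M_Q.Spanning (b ∩ Q))) ∧
      N ↾ S = M_S ∧ N.conTo Q = M_Q ∧ N.SQComplete S Q := by
  subst hES hEQ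
  refine ⟨freeProduct M_S M_Q hdisj, freeProduct_ground hdisj, fun b ↦ ?_,
    freeProduct_restrict_left hdisj, ?_, freeProduct_sqComplete hdisj⟩
  · rw [freeProduct_isBase_iff]
    refine and_congr_right fun hb ↦ and_congr_left' ?_
    rw [← ((M_S.ground_finite.union M_Q.ground_finite).subset hb).cast_ncard_eq,
      ← eRk_ground, ← eRk_ground, ← cast_rnk_eq_eRk, ← cast_rnk_eq_eRk, ← Nat.cast_add,
      Nat.cast_inj]
  · rw [conTo, freeProduct_dual_restrict_right, dual_dual]
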